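/- Let G be a locally compact second countable, compactly generated group with compact symmetric generating set S, and let μ be a cohomologically adapted probability measure on G. Let H be a real Hilbert space, π : G → O(H) a strongly continuous representation by surjective linear isometries, and b ∈ Z¹(G, π) a 1-cocycle. Then for every n ≥ 1: (∫_G ‖b(g)‖² dμ^{*n}(g))^{1/2} ≤ √n · (∫_G ‖b(g)‖² dμ(g))^{1/2}, and equality holds for all n ≥ 1 if and only if b is μ-harmonic, i.e. ∫_G b(g) dμ(g) = 0. -/

import Mathlib

open Pointwise
open scoped ENNReal

noncomputable section

/-- The word length of `g` with respect to a generating set `S`: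
`|g|_S = min {n : g ∈ Sⁿ}`. -/
def wordLength {G : Type*} [Monoid G] (S : Set G) (g : G) : ℕ :=
  sInf {n : ℕ | g ∈ S ^ n}

/-- The `n`-fold convolution power `μ^{*n}` of a measure on a group
(with `μ^{*0} = δ₁`). -/
def convPow {G : Type*} [Monoid G] [MeasurableSpace G]
    (μ : MeasureTheory.Measure G) : ℕ → MeasureTheory.Measure G
  | 0 => MeasureTheory.Measure.dirac 1
  | n + 1 => MeasureTheory.Measure.map (fun q : G × G => q.1 * q.2)
      ((convPow μ n).prod μ)

/-- A Borel probability measure `μ` on a locally compact compactly generated group `G`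
with compact symmetric generating set `S` is cohomologically adapted if it is symmetric,
absolutely continuous with respect to the Haar measure, its support contains `S`, its
density is essentially bounded below by a positive constant on `S`, and it has finite
`p`-moments for all `1 ≤ p < ∞`. -/
structure CohomologicallyAdapted {G : Type*} [Group G] [TopologicalSpace G]
    [IsTopologicalGroup G] [LocallyCompactSpace G] [MeasurableSpace G] [BorelSpace G]
    (S : Set G) (μ : MeasureTheory.Measure G) : Prop where
  isProb : MeasureTheory.IsProbabilityMeasure μ
  symmetric : MeasureTheory.Measure.map (fun g => g⁻¹) μ = μ
  absCont : μ.AbsolutelyContinuous MeasureTheory.Measure.haar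
  suppContains : ∀ g ∈ S, ∀ U : Set G, IsOpen U → g ∈ U → 0 < μ U
  densityBounded : ∃ ε : ℝ≥0∞, 0 < ε ∧
    ∀ᵐ x ∂((MeasureTheory.Measure.haar : MeasureTheory.Measure G).restrict S),
      ε ≤ μ.rnDeriv MeasureTheory.Measure.haar x
  finiteMoments : ∀ p : ℝ, 1 ≤ p →
    MeasureTheory.Integrable (fun g => (wordLength S g : ℝ) ^ p) μ

/-!
Write `B = ∫ b dμ` and `P x = ∫ π g x dμ(g)` for the Markov operator of `μ`. Integrating the
cocycle identity `b (g h) = b g + π g (b h)` over `μ^{*n} ⊗ μ`, and using the symmetry of `μ`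
through `b g⁻¹ = -π g⁻¹ (b g)`, gives the recursion
`‖b‖²_{μ^{*(n+1)}} = ‖b‖²_{μ^{*n}} + ‖b‖²_μ - 2 ∑_{k<n} ⟪B, Pᵏ B⟫`.
Since `P` is a self-adjoint contraction, the even terms `⟪B, P²ʲ B⟫ = ‖Pʲ B‖²` dominate the
following odd terms, so the correction sums are nonnegative, which gives the bound. The correction
at `n = 1` is `2‖B‖²`, so equality already at `n = 2` forces `B = 0`.
-/

open MeasureTheory Finset
open scoped RealInnerProductSpace

section ConvPow

variable {G : Type*} [Monoid G] [MeasurableSpace G] (μ : Measure G)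
  {E : Type*} [NormedAddCommGroup E]

theorem integral_convPow_zero [NormedSpace ℝ E] [CompleteSpace E] {f : G → E}
    (hf : StronglyMeasurable f) : ∫ g, f g ∂convPow μ 0 = f 1 :=
  integral_dirac' f 1 hf

variable [MeasurableMul₂ G]

instance isProbabilityMeasure_convPow [IsProbabilityMeasure μ] (n : ℕ) :
    IsProbabilityMeasure (convPow μ n) := by
  induction n with
  | zero => rw [convPow]; infer_instance
  | succ n ih =>
    rw [convPow]
    exact Measure.isProbabilityMeasure_map measurable_mul.aemeasurable

instance sFinite_convPow [SFinite μ] (n : ℕ) : SFinite (convPow μ n) := by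
  induction n with
  | zero => rw [convPow]; infer_instance
  | succ n ih => rw [convPow]; infer_instance

theorem integral_convPow_succ [NormedSpace ℝ E] [SFinite μ] {f : G → E} {n : ℕ}
    (hf : Integrable f (convPow μ (n + 1))) :
    ∫ g, f g ∂convPow μ (n + 1) = ∫ g, ∫ h, f (g * h) ∂μ ∂convPow μ n := by
  rw [convPow] at hf ⊢
  rw [integral_map measurable_mul.aemeasurable hf.1]
  exact integral_prod _ ((integrable_map_measure hf.1 measurable_mul.aemeasurable).1 hf)

theorem memLp_convPow [IsProbabilityMeasure μ] {p : ℝ≥0∞} {f : G → E} (hf : StronglyMeasurable f)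
    (hmul : ∀ g h, ‖f (g * h)‖ ≤ ‖f g‖ + ‖f h‖) (hfμ : MemLp f p μ) (n : ℕ) :
    MemLp f p (convPow μ n) := by
  induction n with
  | zero =>
    rw [convPow]
    exact .of_bound hf.aestronglyMeasurable ‖f 1‖
      ((ae_dirac_iff (measurableSet_le hf.norm.measurable measurable_const)).2 le_rfl)
  | succ n ih =>
    rw [convPow, memLp_map_measure_iff hf.aestronglyMeasurable measurable_mul.aemeasurable]
    refine ((ih.norm.comp_fst μ).add (hfμ.norm.comp_snd _)).of_le
      (hf.comp_measurable measurable_mul).aestronglyMeasurable (ae_of_all _ fun q => ?_)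
    exact (hmul q.1 q.2).trans (Real.le_norm_self _)

end ConvPow

section Cocycle

variable {G : Type*} [Group G] {H : Type*} [NormedAddCommGroup H] [NormedSpace ℝ H]

def IsCocycle (π : G →* (H ≃ₗᵢ[ℝ] H)) (b : G → H) : Prop :=
  ∀ g h, b (g * h) = b g + π g (b h)

namespace IsCocycle

variable {π : G →* (H ≃ₗᵢ[ℝ] H)} {b : G → H}

theorem map_one (hcoc : IsCocycle π b) : b 1 = 0 := by
  simpa using hcoc 1 1

theorem map_inv (hcoc : IsCocycle π b) (g : G) : b g⁻¹ = -π g⁻¹ (b g) := by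
  have h := hcoc g⁻¹ g
  rw [inv_mul_cancel, hcoc.map_one] at h
  exact eq_neg_of_add_eq_zero_left h.symm

theorem norm_mul_le (hcoc : IsCocycle π b) (g h : G) : ‖b (g * h)‖ ≤ ‖b g‖ + ‖b h‖ := by
  simpa [hcoc g h] using norm_add_le (b g) (π g (b h))

theorem norm_le_of_mem_pow (hcoc : IsCocycle π b) {S : Set G} {M : ℝ}
    (hS : ∀ s ∈ S, ‖b s‖ ≤ M) {n : ℕ} {g : G} (hg : g ∈ S ^ n) : ‖b g‖ ≤ n * M := by
  induction n generalizing g with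
  | zero =>
    rw [pow_zero, Set.mem_one] at hg
    simp [hg, hcoc.map_one]
  | succ n ih =>
    obtain ⟨x, hx, s, hs, rfl⟩ := pow_succ S n ▸ hg
    calc ‖b (x * s)‖ ≤ ‖b x‖ + ‖b s‖ := hcoc.norm_mul_le x s
      _ ≤ n * M + M := add_le_add (ih hx) (hS s hs)
      _ = (n + 1 : ℕ) * M := by push_cast; ring

theorem exists_norm_le_mul_wordLength [TopologicalSpace G] (hcoc : IsCocycle π b)
    (hb : Continuous b) {S : Set G} (hS : IsCompact S) (hgen : ∀ g : G, ∃ n : ℕ, g ∈ S ^ n) :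
    ∃ M : ℝ, ∀ g, ‖b g‖ ≤ M * wordLength S g := by
  obtain ⟨M, hM⟩ := hS.exists_bound_of_continuousOn hb.continuousOn
  refine ⟨M, fun g => ?_⟩
  rw [mul_comm]
  exact hcoc.norm_le_of_mem_pow hM (Nat.sInf_mem (hgen g))

theorem memLp_two_of_integrable_wordLength_sq [TopologicalSpace G] [SecondCountableTopology G]
    [MeasurableSpace G] [OpensMeasurableSpace G] (hcoc : IsCocycle π b) (hb : Continuous b)
    {S : Set G} (hS : IsCompact S) (hgen : ∀ g : G, ∃ n : ℕ, g ∈ S ^ n) {μ : Measure G}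
    (hmom : Integrable (fun g => (wordLength S g : ℝ) ^ 2) μ) : MemLp b 2 μ := by
  obtain ⟨M, hM⟩ := hcoc.exists_norm_le_mul_wordLength hb hS hgen
  rw [memLp_two_iff_integrable_sq_norm hb.aestronglyMeasurable]
  refine (hmom.const_mul (M ^ 2)).mono' (hb.norm.pow 2).aestronglyMeasurable
    (ae_of_all _ fun g => ?_)
  rw [Real.norm_of_nonneg (by positivity), ← mul_pow]
  exact pow_le_pow_left₀ (norm_nonneg _) (hM g) 2

end IsCocycle

end Cocycle

section SymmetricContraction

variable {E : Type*} [NormedAddCommGroup E] [InnerProductSpace ℝ E] {T : E → E}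

theorem inner_iterate_comm (hT : ∀ x y, ⟪T x, y⟫ = ⟪x, T y⟫) (k : ℕ) (x y : E) :
    ⟪T^[k] x, y⟫ = ⟪x, T^[k] y⟫ := by
  induction k generalizing x with
  | zero => rfl
  | succ k ih => rw [Function.iterate_succ_apply, ih, hT, ← Function.iterate_succ_apply' T k y]

theorem inner_iterate_two_mul (hT : ∀ x y, ⟪T x, y⟫ = ⟪x, T y⟫) (j : ℕ) (x : E) :
    ⟪x, T^[2 * j] x⟫ = ‖T^[j] x‖ ^ 2 := by
  rw [two_mul, Function.iterate_add_apply, ← inner_iterate_comm hT, real_inner_self_eq_norm_sq]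

theorem neg_sq_le_inner_iterate_two_mul_add_one (hT : ∀ x y, ⟪T x, y⟫ = ⟪x, T y⟫)
    (hT₁ : ∀ x, ‖T x‖ ≤ ‖x‖) (j : ℕ) (x : E) :
    -‖T^[j] x‖ ^ 2 ≤ ⟪x, T^[2 * j + 1] x⟫ := by
  set y := T^[j] x
  rw [show 2 * j + 1 = j + (j + 1) by ring, Function.iterate_add_apply, ← inner_iterate_comm hT,
    Function.iterate_succ_apply']
  calc -‖y‖ ^ 2 ≤ -(‖y‖ * ‖T y‖) := by
        rw [sq]; exact neg_le_neg (mul_le_mul_of_nonneg_left (hT₁ y) (norm_nonneg y))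
    _ ≤ ⟪y, T y⟫ := neg_le_of_abs_le (abs_real_inner_le_norm y (T y))

theorem sum_range_inner_iterate_nonneg (hT : ∀ x y, ⟪T x, y⟫ = ⟪x, T y⟫)
    (hT₁ : ∀ x, ‖T x‖ ≤ ‖x‖) (x : E) (n : ℕ) : 0 ≤ ∑ k ∈ range n, ⟪x, T^[k] x⟫ := by
  have heven : ∀ j, 0 ≤ ∑ k ∈ range (2 * j), ⟪x, T^[k] x⟫ := by
    intro j
    induction j with
    | zero => simp
    | succ j ih =>
      rw [show 2 * (j + 1) = 2 * j + 1 + 1 by ring, sum_range_succ, sum_range_succ,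
        inner_iterate_two_mul hT]
      linarith [neg_sq_le_inner_iterate_two_mul_add_one hT hT₁ j x]
  obtain ⟨j, rfl | rfl⟩ := Nat.even_or_odd' n
  · exact heven j
  · rw [sum_range_succ, inner_iterate_two_mul hT]
    exact add_nonneg (heven j) (sq_nonneg _)

end SymmetricContraction

section MarkovOperator

variable {G : Type*} [Group G] [MeasurableSpace G] {H : Type*} [NormedAddCommGroup H]
  [InnerProductSpace ℝ H]

def markovOperator (μ : Measure G) (π : G →* (H ≃ₗᵢ[ℝ] H)) (x : H) : H :=
  ∫ g, π g x ∂μ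

variable {μ : Measure G} {π : G →* (H ≃ₗᵢ[ℝ] H)}

theorem norm_markovOperator_le [IsProbabilityMeasure μ] (x : H) :
    ‖markovOperator μ π x‖ ≤ ‖x‖ :=
  calc ‖markovOperator μ π x‖ ≤ ∫ g, ‖π g x‖ ∂μ := norm_integral_le_integral_norm _
    _ = ‖x‖ := by simp

theorem integral_inner_linearIsometryEquiv [CompleteSpace H] {α : Type*} [MeasurableSpace α]
    {ν : Measure α} (L : H ≃ₗᵢ[ℝ] H) (v : H) {f : α → H} (hf : Integrable f ν) :
    ∫ a, ⟪v, L (f a)⟫ ∂ν = ⟪v, L (∫ a, f a ∂ν)⟫ :=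
  calc ∫ a, ⟪v, L (f a)⟫ ∂ν = ∫ a, ⟪L.symm v, f a⟫ ∂ν := by
        simp [LinearIsometryEquiv.inner_map_eq_flip]
    _ = ⟪v, L (∫ a, f a ∂ν)⟫ := by
        rw [integral_inner hf, LinearIsometryEquiv.inner_map_eq_flip, L.symm_symm]

variable [TopologicalSpace G] [BorelSpace G]

theorem integrable_orbit [SecondCountableTopology G] [IsFiniteMeasure μ] {x : H}
    (hπ : Continuous fun g => π g x) : Integrable (fun g => π g x) μ :=
  (integrable_const ‖x‖).mono' hπ.aestronglyMeasurable
    (ae_of_all _ fun _ => (LinearIsometryEquiv.norm_map _ _).le)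

theorem integrable_inner_orbit {b : G → H} (hb : Continuous b) (hbμ : Integrable b μ) {y : H}
    (hπ : Continuous fun g => π g y) : Integrable (fun g => ⟪b g, π g y⟫) μ :=
  (hbμ.norm.mul_const ‖y‖).mono' (hb.inner hπ).aestronglyMeasurable (ae_of_all _ fun g => by
    simpa using abs_real_inner_le_norm (b g) (π g y))

theorem inner_markovOperator_comm [SecondCountableTopology G] [IsTopologicalGroup G]
    [CompleteSpace H] [IsFiniteMeasure μ] [μ.IsInvInvariant] (hπ : ∀ x : H, Continuous fun g => π g x) (x y : H) :
    ⟪markovOperator μ π x, y⟫ = ⟪x, markovOperator μ π y⟫ := by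
  rw [markovOperator, markovOperator, real_inner_comm, ← integral_inner (integrable_orbit (hπ x)),
    ← integral_inner (integrable_orbit (hπ y)), ← integral_inv_eq_self]
  refine integral_congr_ae (ae_of_all _ fun g => ?_)
  simp only [map_inv, LinearIsometryEquiv.coe_inv]
  rw [← LinearIsometryEquiv.inner_map_eq_flip, real_inner_comm]

end MarkovOperator

namespace IsCocycle

variable {G : Type*} [Group G] {H : Type*} [NormedAddCommGroup H] [InnerProductSpace ℝ H]
  {π : G →* (H ≃ₗᵢ[ℝ] H)} {b : G → H}

theorem inner_map_inv (hcoc : IsCocycle π b) (g : G) (x : H) :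
    ⟪b g⁻¹, π g⁻¹ x⟫ = -⟪b g, x⟫ := by
  rw [hcoc.map_inv, inner_neg_left, LinearIsometryEquiv.inner_map_map]

variable [MeasurableSpace G]

theorem integral_norm_sq_convPow_zero [TopologicalSpace G] [OpensMeasurableSpace G]
    (hcoc : IsCocycle π b) (hb : Continuous b) (μ : Measure G) :
    ∫ g, ‖b g‖ ^ 2 ∂convPow μ 0 = 0 := by
  rw [integral_convPow_zero μ (f := fun g => ‖b g‖ ^ 2) (hb.norm.pow 2).stronglyMeasurable,
    hcoc.map_one]
  simp

variable [CompleteSpace H]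

theorem integral_inner_map [MeasurableInv G] {μ : Measure G} [μ.IsInvInvariant]
    (hcoc : IsCocycle π b) (hbμ : Integrable b μ) (x : H) :
    ∫ g, ⟪b g, π g x⟫ ∂μ = -⟪∫ g, b g ∂μ, x⟫ := by
  rw [← integral_inv_eq_self]
  simp_rw [hcoc.inner_map_inv]
  rw [integral_neg, real_inner_comm, ← integral_inner hbμ]
  simp_rw [real_inner_comm]

theorem integral_norm_sq_comp_mul_left {μ : Measure G} [IsProbabilityMeasure μ]
    (hcoc : IsCocycle π b) (hbμ : Integrable b μ) (hsq : Integrable (fun g => ‖b g‖ ^ 2) μ)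
    (g : G) : ∫ h, ‖b (g * h)‖ ^ 2 ∂μ
      = ‖b g‖ ^ 2 + 2 * ⟪b g, π g (∫ h, b h ∂μ)⟫ + ∫ h, ‖b h‖ ^ 2 ∂μ := by
  have hexpand (h : G) :
      ‖b (g * h)‖ ^ 2 = ‖b g‖ ^ 2 + 2 * ⟪b g, π g (b h)⟫ + ‖b h‖ ^ 2 := by
    rw [hcoc g h, norm_add_sq_real, LinearIsometryEquiv.norm_map]
  have hcross : Integrable (fun h => 2 * ⟪b g, π g (b h)⟫) μ :=
    (((π g).integrable_comp_iff.2 hbμ).const_inner _).const_mul 2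
  have hleft : Integrable (fun h => ‖b g‖ ^ 2 + 2 * ⟪b g, π g (b h)⟫) μ :=
    (integrable_const _).add hcross
  simp_rw [hexpand]
  rw [integral_add hleft hsq, integral_add (integrable_const _) hcross, integral_const,
    integral_const_mul, integral_inner_linearIsometryEquiv _ _ hbμ]
  simp

variable [TopologicalSpace G] [IsTopologicalGroup G] [SecondCountableTopology G] [BorelSpace G]
  {μ : Measure G} [IsProbabilityMeasure μ] [μ.IsInvInvariant]

theorem integral_inner_map_comp_mul_left (hcoc : IsCocycle π b) (hb : Continuous b)
    (hπ : ∀ x : H, Continuous fun g => π g x) (hbμ : Integrable b μ) (x : H) (g : G) :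
    ∫ h, ⟪b (g * h), π (g * h) x⟫ ∂μ
      = ⟪b g, π g (markovOperator μ π x)⟫ - ⟪∫ g, b g ∂μ, x⟫ := by
  have hsplit (h : G) : ⟪b (g * h), π (g * h) x⟫ = ⟪b g, π g (π h x)⟫ + ⟪b h, π h x⟫ := by
    rw [hcoc g h, map_mul, LinearIsometryEquiv.coe_mul, Function.comp_apply, inner_add_left,
      LinearIsometryEquiv.inner_map_map]
  simp_rw [hsplit]
  rw [integral_add (((π g).integrable_comp_iff.2 (integrable_orbit (hπ x))).const_inner _)
      (integrable_inner_orbit hb hbμ (hπ x)),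
    integral_inner_linearIsometryEquiv _ _ (integrable_orbit (hπ x)),
    hcoc.integral_inner_map hbμ, markovOperator, sub_eq_add_neg]

theorem integral_inner_map_convPow (hcoc : IsCocycle π b) (hb : Continuous b)
    (hπ : ∀ x : H, Continuous fun g => π g x) (hL2 : MemLp b 2 μ) (n : ℕ) (x : H) :
    ∫ g, ⟪b g, π g x⟫ ∂convPow μ n
      = -∑ k ∈ range n, ⟪∫ g, b g ∂μ, (markovOperator μ π)^[k] x⟫ := by
  have hbν (m : ℕ) : Integrable b (convPow μ m) :=
    (memLp_convPow μ hb.stronglyMeasurable hcoc.norm_mul_le hL2 m).integrable one_le_two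
  have hbμ : Integrable b μ := hL2.integrable one_le_two
  induction n generalizing x with
  | zero =>
    rw [integral_convPow_zero μ (hb.inner (𝕜 := ℝ) (hπ x)).stronglyMeasurable, hcoc.map_one]
    simp
  | succ n ih =>
    rw [integral_convPow_succ μ (integrable_inner_orbit hb (hbν _) (hπ x))]
    simp_rw [hcoc.integral_inner_map_comp_mul_left hb hπ hbμ x]
    rw [integral_sub (integrable_inner_orbit hb (hbν n) (hπ _)) (integrable_const _), ih,
      integral_const, sum_range_succ']
    simp [Function.iterate_succ_apply]
    ring

theorem integral_norm_sq_convPow_succ (hcoc : IsCocycle π b) (hb : Continuous b)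
    (hπ : ∀ x : H, Continuous fun g => π g x) (hL2 : MemLp b 2 μ) (n : ℕ) :
    ∫ g, ‖b g‖ ^ 2 ∂convPow μ (n + 1) = ∫ g, ‖b g‖ ^ 2 ∂convPow μ n + ∫ g, ‖b g‖ ^ 2 ∂μ
      - 2 * ∑ k ∈ range n, ⟪∫ g, b g ∂μ, (markovOperator μ π)^[k] (∫ g, b g ∂μ)⟫ := by
  have hL2ν := memLp_convPow μ hb.stronglyMeasurable hcoc.norm_mul_le hL2
  have hsq {ν : Measure G} (h : MemLp b 2 ν) : Integrable (fun g => ‖b g‖ ^ 2) ν :=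
    (memLp_two_iff_integrable_sq_norm hb.aestronglyMeasurable).1 h
  have hcross : Integrable (fun g => 2 * ⟪b g, π g (∫ g, b g ∂μ)⟫) (convPow μ n) :=
    (integrable_inner_orbit hb ((hL2ν n).integrable one_le_two) (hπ _)).const_mul 2
  have hleft : Integrable (fun g => ‖b g‖ ^ 2 + 2 * ⟪b g, π g (∫ g, b g ∂μ)⟫) (convPow μ n) :=
    (hsq (hL2ν n)).add hcross
  rw [integral_convPow_succ μ (hsq (hL2ν _))]
  simp_rw [hcoc.integral_norm_sq_comp_mul_left (hL2.integrable one_le_two) (hsq hL2)]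
  rw [integral_add hleft (integrable_const _), integral_add (hsq (hL2ν n)) hcross,
    integral_const_mul, hcoc.integral_inner_map_convPow hb hπ hL2, integral_const]
  simp
  ring

theorem integral_norm_sq_convPow_le (hcoc : IsCocycle π b) (hb : Continuous b)
    (hπ : ∀ x : H, Continuous fun g => π g x) (hL2 : MemLp b 2 μ) (n : ℕ) :
    ∫ g, ‖b g‖ ^ 2 ∂convPow μ n ≤ n * ∫ g, ‖b g‖ ^ 2 ∂μ := by
  induction n with
  | zero => simp [hcoc.integral_norm_sq_convPow_zero hb μ]
  | succ n ih =>
    rw [hcoc.integral_norm_sq_convPow_succ hb hπ hL2]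
    have := sum_range_inner_iterate_nonneg (inner_markovOperator_comm hπ)
      (norm_markovOperator_le (μ := μ) (π := π)) (∫ g, b g ∂μ) n
    push_cast
    linarith

theorem forall_integral_norm_sq_convPow_eq_iff (hcoc : IsCocycle π b) (hb : Continuous b)
    (hπ : ∀ x : H, Continuous fun g => π g x) (hL2 : MemLp b 2 μ) :
    (∀ n : ℕ, 1 ≤ n → ∫ g, ‖b g‖ ^ 2 ∂convPow μ n = n * ∫ g, ‖b g‖ ^ 2 ∂μ)
      ↔ ∫ g, b g ∂μ = 0 := by
  have hrec := hcoc.integral_norm_sq_convPow_succ hb hπ hL2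
  constructor
  · intro h
    have h2 := hrec 1
    rw [h 2 le_add_self, h 1 le_rfl] at h2
    simp only [range_one, sum_singleton, Function.iterate_zero_apply] at h2
    exact inner_self_eq_zero (𝕜 := ℝ).1 (by push_cast at h2; linarith)
  · intro hB
    have hlin (n : ℕ) : ∫ g, ‖b g‖ ^ 2 ∂convPow μ n = n * ∫ g, ‖b g‖ ^ 2 ∂μ := by
      induction n with
      | zero => simp [hcoc.integral_norm_sq_convPow_zero hb μ]
      | succ n ih => simp [hrec, hB, ih, add_mul]
    exact fun n _ => hlin n

end IsCocycle

theorem cocycle_sqrt_growth_hilbert_general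
    {G : Type*} [Group G] [TopologicalSpace G] [IsTopologicalGroup G]
    [LocallyCompactSpace G] [SecondCountableTopology G]
    [MeasurableSpace G] [BorelSpace G]
    (S : Set G) (hScpt : IsCompact S)
    (hSgen : ∀ g : G, ∃ n : ℕ, g ∈ S ^ n)
    (μ : MeasureTheory.Measure G) (hμ : CohomologicallyAdapted S μ)
    {H : Type*} [NormedAddCommGroup H] [InnerProductSpace ℝ H] [CompleteSpace H]
    (π : G →* (H ≃ₗᵢ[ℝ] H)) (hπ : ∀ x : H, Continuous fun g : G => π g x)
    (b : G → H) (hb : Continuous b)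
    (hcoc : ∀ g h : G, b (g * h) = b g + π g (b h)) :
    (∀ n : ℕ, 1 ≤ n →
      (∫ g, ‖b g‖ ^ 2 ∂(convPow μ n)) ^ ((1 : ℝ) / 2)
        ≤ Real.sqrt n * (∫ g, ‖b g‖ ^ 2 ∂μ) ^ ((1 : ℝ) / 2)) ∧
    ((∀ n : ℕ, 1 ≤ n →
      (∫ g, ‖b g‖ ^ 2 ∂(convPow μ n)) ^ ((1 : ℝ) / 2)
        = Real.sqrt n * (∫ g, ‖b g‖ ^ 2 ∂μ) ^ ((1 : ℝ) / 2)) ↔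
      ∫ g, b g ∂μ = 0) := by
  have hcoc : IsCocycle π b := hcoc
  have := hμ.isProb
  have : μ.IsInvInvariant := ⟨hμ.symmetric⟩
  have hL2 : MemLp b 2 μ :=
    hcoc.memLp_two_of_integrable_wordLength_sq hb hScpt hSgen (by simpa using hμ.finiteMoments 2 one_le_two)
  have hnonneg {ν : Measure G} : 0 ≤ ∫ g, ‖b g‖ ^ 2 ∂ν := integral_nonneg fun _ => sq_nonneg _
  simp only [← Real.sqrt_eq_rpow, ← Real.sqrt_mul (Nat.cast_nonneg _)]
  refine ⟨fun n _ => Real.sqrt_le_sqrt (hcoc.integral_norm_sq_convPow_le hb hπ hL2 n), ?_⟩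
  rw [← hcoc.forall_integral_norm_sq_convPow_eq_iff hb hπ hL2]
  exact forall₂_congr fun n _ => Real.sqrt_inj hnonneg (mul_nonneg n.cast_nonneg hnonneg)

theorem cocycle_sqrt_growth_hilbert
    {G : Type*} [Group G] [TopologicalSpace G] [IsTopologicalGroup G]
    [LocallyCompactSpace G] [SecondCountableTopology G]
    [MeasurableSpace G] [BorelSpace G]
    (S : Set G) (hScpt : IsCompact S) (hSsymm : S⁻¹ = S)
    (hSgen : ∀ g : G, ∃ n : ℕ, g ∈ S ^ n)
    (μ : MeasureTheory.Measure G) (hμ : CohomologicallyAdapted S μ)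
    {H : Type*} [NormedAddCommGroup H] [InnerProductSpace ℝ H] [CompleteSpace H]
    (π : G →* (H ≃ₗᵢ[ℝ] H)) (hπ : ∀ x : H, Continuous fun g : G => π g x)
    (b : G → H) (hb : Continuous b)
    (hcoc : ∀ g h : G, b (g * h) = b g + π g (b h)) :
    (∀ n : ℕ, 1 ≤ n →
      (∫ g, ‖b g‖ ^ 2 ∂(convPow μ n)) ^ ((1 : ℝ) / 2)
        ≤ Real.sqrt n * (∫ g, ‖b g‖ ^ 2 ∂μ) ^ ((1 : ℝ) / 2)) ∧
    ((∀ n : ℕ, 1 ≤ n →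
      (∫ g, ‖b g‖ ^ 2 ∂(convPow μ n)) ^ ((1 : ℝ) / 2)
        = Real.sqrt n * (∫ g, ‖b g‖ ^ 2 ∂μ) ^ ((1 : ℝ) / 2)) ↔
      ∫ g, b g ∂μ = 0) :=
  cocycle_sqrt_growth_hilbert_general S hScpt hSgen μ hμ π hπ b hb hcoc
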